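/- There exists a function insert from flat Plebeia trees, keys, and values to optional flat Plebeia trees such that for every tree t satisfying the structural invariants (SI1) and (SI2), every key k, and every value v: if {k} together with DOM(t) is prefix-free and k ∉ DOM(t), then insert(t, k, v) = Some t' for some tree t' satisfying the structural invariants with ⟦t'⟧(k) = v and ⟦t'⟧(k') = ⟦t⟧(k') for every key k' ≠ k; and otherwise (i.e., if {k} ∪ DOM(t) is not prefix-free or k ∈ DOM(t)) insert(t, k, v) = None. -/
import Mathlib


/-- A side is `L` or `R`. -/
inductive Side : Type
  | L | R
deriving DecidableEq, Repr

/-- A key is a list of sides. -/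
abbrev Key := List Side

/-- The strict order `L < R` on sides. -/
def Side.lt : Side → Side → Prop := fun a b => a = Side.L ∧ b = Side.R

/-- The strict lexicographic order on keys induced by `L < R`. -/
def keyLt : Key → Key → Prop := List.Lex Side.lt

/-- A list of keys is prefix-free: for any two distinct keys in it,
neither is a prefix of the other. -/
def PrefixFreeList (ks : List Key) : Prop :=
  List.Pairwise (fun a b => ¬ a <+: b ∧ ¬ b <+: a) ks

/-- A set of keys is prefix-free. -/
def PrefixFreeSet (S : Set Key) : Prop :=
  ∀ a ∈ S, ∀ b ∈ S, a ≠ b → ¬ a <+: b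

/-- A list of keys is strictly increasing in the lexicographic order. -/
def SortedKeys (ks : List Key) : Prop := List.Pairwise keyLt ks

/-- Key list of an association list is prefix-free and strictly increasing. -/
def GoodKeyList (ks : List Key) : Prop := PrefixFreeList ks ∧ SortedKeys ks

/-- Prepend the key `s` to the key of every entry. -/
def prependAll {β : Type _} (s : Key) (l : List (Key × β)) : List (Key × β) :=
  l.map (fun e => (s ++ e.1, e.2))

/-- `lookup l k` is `some` of the value of the first entry of `l` with key `k`. -/
def lookupA {β : Type _} (l : List (Key × β)) (k : Key) : Option β :=
  (l.find? (fun e => decide (e.1 = k))).map Prod.snd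
/-- Flat Plebeia trees over a value type `α`. -/
inductive FNode (α : Type) : Type
  | leaf : α → FNode α
  | branch : FNode α → FNode α → FNode α
  | extender : Key → FNode α → FNode α

variable {α : Type}

def FNode.isExtender : FNode α → Prop
  | .extender _ _ => True
  | _ => False

/-- The model `⟦t⟧ : key ⇀ α` of a flat Plebeia tree, as a function into `Option`. -/
def FNode.model : FNode α → Key → Option α
  | .leaf v, [] => some v
  | .leaf _, _ :: _ => none
  | .branch l _, Side.L :: k => l.model k
  | .branch _ r, Side.R :: k => r.model k
  | .branch _ _, [] => none
  | .extender s n, k => if s <+: k then n.model (k.drop s.length) else none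

/-- `DOM t`: the set of keys on which `⟦t⟧` is defined. -/
def FNode.dom (t : FNode α) : Set Key := {k | (t.model k).isSome}

/-- Structural invariants (SI1), (SI2) at every subtree:
no extender has an extender as direct child, and no extender has an empty key. -/
def FNode.inv : FNode α → Prop
  | .leaf _ => True
  | .branch l r => l.inv ∧ r.inv
  | .extender s n => (¬ n.isExtender) ∧ s ≠ [] ∧ n.inv

section Dev

/-- Smart extender constructor. -/
def mkExt : Key → FNode α → FNode α
  | [], n => n
  | s, .extender s' n => .extender (s ++ s') n
  | s, n => .extender s n

/-- Insert under an extender label. -/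
def insExt (n : FNode α) (v : α) (f : Key → Option (FNode α)) :
    Key → Key → Option (FNode α)
  | [], k => f k
  | _ :: _, [] => none
  | Side.L :: s', Side.L :: k' => (insExt n v f s' k').map (mkExt [Side.L])
  | Side.R :: s', Side.R :: k' => (insExt n v f s' k').map (mkExt [Side.R])
  | Side.L :: s', Side.R :: k' =>
      some (.branch (mkExt s' n) (mkExt k' (.leaf v)))
  | Side.R :: s', Side.L :: k' =>
      some (.branch (mkExt k' (.leaf v)) (mkExt s' n))

/-- The insert function. -/
def insF : FNode α → Key → α → Option (FNode α)
  | .leaf _, _, _ => none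
  | .branch _ _, [], _ => none
  | .branch l r, Side.L :: k, v => (insF l k v).map (fun t => .branch t r)
  | .branch l r, Side.R :: k, v => (insF r k v).map (fun t => .branch l t)
  | .extender s n, k, v => insExt n v (fun k' => insF n k' v) s k

lemma model_extender (s : Key) (n : FNode α) (k : Key) :
    (FNode.extender s n).model k = if s <+: k then n.model (k.drop s.length) else none := rfl

lemma model_mkExt (s : Key) (n : FNode α) (k : Key) :
    (mkExt s n).model k = (FNode.extender s n).model k := by
  cases s with
  | nil => simp [mkExt, model_extender, List.nil_prefix]
  | cons c s0 =>
    cases n with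
    | leaf v => rfl
    | branch l r => rfl
    | extender s' n' =>
      show (FNode.extender ((c::s0) ++ s') n').model k = _
      rw [model_extender, model_extender, model_extender]
      by_cases h1 : (c::s0) <+: k
      · obtain ⟨t, rfl⟩ := h1
        simp only [List.drop_left, if_pos (List.prefix_append _ _),
          List.append_assoc, List.prefix_append_right_inj]
        by_cases h2 : s' <+: t
        · rw [if_pos h2, if_pos h2]
          congr 1
          rw [List.length_append]
          obtain ⟨u, rfl⟩ := h2
          rw [List.drop_left]
          rw [show (c::s0).length + s'.length = ((c::s0) ++ s').length by
            rw [List.length_append], ← List.append_assoc, List.drop_left]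
        · rw [if_neg h2, if_neg h2]
      · rw [if_neg h1, if_neg fun h => h1 (((c::s0).prefix_append s').trans h)]

lemma mkExt_nil (n : FNode α) : mkExt [] n = n := by
  cases n <;> rfl

lemma inv_mkExt {s : Key} {n : FNode α} (h : n.inv) : (mkExt s n).inv := by
  cases s with
  | nil => rw [mkExt_nil]; exact h
  | cons c s0 =>
    cases n with
    | leaf v => exact ⟨fun h => h, by simp, trivial⟩
    | branch l r => exact ⟨fun h => h, by simp, h⟩
    | extender s' n' =>
      obtain ⟨h1, h2, h3⟩ := h
      exact ⟨h1, by simp, h3⟩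

lemma dom_nonempty (t : FNode α) : ∃ k, (t.model k).isSome := by
  induction t with
  | leaf v => exact ⟨[], by simp [FNode.model]⟩
  | branch l r ihl ihr =>
    obtain ⟨k, hk⟩ := ihl
    exact ⟨Side.L :: k, by simpa [FNode.model] using hk⟩
  | extender s n ih =>
    obtain ⟨k, hk⟩ := ih
    refine ⟨s ++ k, ?_⟩
    rw [model_extender, if_pos (List.prefix_append _ _), List.drop_left]
    exact hk

lemma dom_prefixFree (t : FNode α) :
    ∀ a, (t.model a).isSome → ∀ b, (t.model b).isSome → a ≠ b → ¬ a <+: b := by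
  induction t with
  | leaf v =>
    intro a ha b hb hab
    cases a with
    | nil =>
      cases b with
      | nil => exact absurd rfl hab
      | cons c b' => simp [FNode.model] at hb
    | cons c a' => simp [FNode.model] at ha
  | branch l r ihl ihr =>
    intro a ha b hb hab hpre
    match a, b with
    | [], _ => simp [FNode.model] at ha
    | _ :: _, [] => simp [FNode.model] at hb
    | Side.L :: a', Side.L :: b' =>
      rw [List.cons_prefix_cons] at hpre
      exact ihl a' ha b' hb (by simpa using hab) hpre.2
    | Side.R :: a', Side.R :: b' =>
      rw [List.cons_prefix_cons] at hpre
      exact ihr a' ha b' hb (by simpa using hab) hpre.2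
    | Side.L :: a', Side.R :: b' =>
      rw [List.cons_prefix_cons] at hpre
      exact (by cases hpre.1 : False)
    | Side.R :: a', Side.L :: b' =>
      rw [List.cons_prefix_cons] at hpre
      exact (by cases hpre.1 : False)
  | extender s n ih =>
    intro a ha b hb hab hpre
    rw [model_extender] at ha hb
    split at ha
    case isFalse => simp at ha
    case isTrue h1 =>
      split at hb
      case isFalse => simp at hb
      case isTrue h2 =>
        obtain ⟨a', rfl⟩ := h1
        obtain ⟨b', rfl⟩ := h2
        rw [List.drop_left] at ha hb
        exact ih a' ha b' hb (by simpa using hab)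
          (by rwa [List.prefix_append_right_inj] at hpre)

/-- The manageable form of the success condition. -/
def Good (t : FNode α) (k : Key) : Prop :=
  ∀ k', (t.model k').isSome → ¬ k <+: k' ∧ ¬ k' <+: k

lemma good_iff (t : FNode α) (k : Key) :
    (PrefixFreeSet (insert k t.dom) ∧ k ∉ t.dom) ↔ Good t k := by
  constructor
  · rintro ⟨pf, hk⟩ k' hk'
    have hkd : k' ∈ t.dom := hk'
    have hne : k ≠ k' := fun h => hk (h ▸ hkd)
    exact ⟨pf k (Set.mem_insert _ _) k' (Set.mem_insert_of_mem _ hkd) hne,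
      pf k' (Set.mem_insert_of_mem _ hkd) k (Set.mem_insert _ _) hne.symm⟩
  · intro hg
    have hk : k ∉ t.dom := fun h => (hg k h).1 (List.prefix_refl k)
    refine ⟨?_, hk⟩
    intro a ha b hb hab
    rcases Set.mem_insert_iff.mp ha with rfl | ha'
    · rcases Set.mem_insert_iff.mp hb with rfl | hb'
      · exact absurd rfl hab
      · exact (hg b hb').1
    · rcases Set.mem_insert_iff.mp hb with rfl | hb'
      · exact (hg a ha').2
      · exact dom_prefixFree t a ha' b hb' hab

/-- Spec predicate. -/
def Spec (t : FNode α) (v : α) (g : Key → Option (FNode α)) : Prop :=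
  ∀ k, (Good t k → ∃ t', g k = some t' ∧ t'.inv ∧
          t'.model k = some v ∧ ∀ k', k' ≠ k → t'.model k' = t.model k') ∧
       (¬ Good t k → g k = none)

lemma model_extender_nil (n : FNode α) (k : Key) :
    (FNode.extender ([] : Key) n).model k = n.model k := by
  simp [model_extender, List.nil_prefix]

lemma model_extender_cons (c : Side) (s0 : Key) (n : FNode α) (k : Key) :
    (FNode.extender (c :: s0) n).model (c :: k) = (FNode.extender s0 n).model k := by
  rw [model_extender, model_extender]
  simp only [List.cons_prefix_cons, true_and, List.length_cons, List.drop_succ_cons]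

lemma model_extender_cons_ne {c d : Side} (h : c ≠ d) (s0 : Key) (n : FNode α) (k : Key) :
    (FNode.extender (c :: s0) n).model (d :: k) = none := by
  rw [model_extender, if_neg]
  rw [List.cons_prefix_cons]
  exact fun hp => h hp.1

lemma model_extender_cons_nil (c : Side) (s0 : Key) (n : FNode α) :
    (FNode.extender (c :: s0) n).model [] = none := by
  rw [model_extender, if_neg]
  simp

lemma good_extender_cons {c : Side} {s : Key} {n : FNode α} {k : Key} :
    Good (FNode.extender (c :: s) n) (c :: k) ↔ Good (FNode.extender s n) k := by
  constructor
  · intro hg k' hk'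
    have hsome : ((FNode.extender (c :: s) n).model (c :: k')).isSome := by
      rw [model_extender_cons]; exact hk'
    have h := hg (c :: k') hsome
    constructor
    · intro hp
      exact h.1 (List.cons_prefix_cons.mpr ⟨rfl, hp⟩)
    · intro hp
      exact h.2 (List.cons_prefix_cons.mpr ⟨rfl, hp⟩)
  · intro hg k' hk'
    match k', hk' with
    | [], hk' => rw [model_extender_cons_nil] at hk'; simp at hk'
    | d :: k'', hk' =>
      by_cases hd : c = d
      · subst hd
        rw [model_extender_cons] at hk'
        have h := hg k'' hk'
        constructor
        · intro hp
          exact h.1 (List.cons_prefix_cons.mp hp).2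
        · intro hp
          exact h.2 (List.cons_prefix_cons.mp hp).2
      · rw [model_extender_cons_ne hd] at hk'; simp at hk'

lemma single_model_self (k0 : Key) (v : α) :
    (mkExt k0 (FNode.leaf v)).model k0 = some v := by
  rw [model_mkExt, model_extender, if_pos (List.prefix_refl _), List.drop_length]
  rfl

lemma single_model_ne {k0 k'' : Key} (h : k'' ≠ k0) (v : α) :
    (mkExt k0 (FNode.leaf v)).model k'' = none := by
  rw [model_mkExt, model_extender]
  split
  case isFalse => rfl
  case isTrue h1 =>
    obtain ⟨u, rfl⟩ := h1
    rw [List.drop_left]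
    cases u with
    | nil => exact absurd (by simp) h
    | cons x u' => rfl

lemma insExt_spec (n : FNode α) (v : α) (f : Key → Option (FNode α))
    (hn : n.inv) (hf : Spec n v f) :
    ∀ s, Spec (FNode.extender s n) v (fun k => insExt n v f s k) := by
  intro s
  induction s with
  | nil =>
    intro k
    have hgood : Good (FNode.extender ([] : Key) n) k ↔ Good n k := by
      unfold Good
      simp only [model_extender_nil]
    constructor
    · intro hg
      obtain ⟨t', h1, h2, h3, h4⟩ := (hf k).1 (hgood.mp hg)
      exact ⟨t', h1, h2, h3, fun k' hk' =>
        (h4 k' hk').trans (model_extender_nil n k').symm⟩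
    · intro hg
      exact (hf k).2 (fun h => hg (hgood.mpr h))
  | cons c s0 ih =>
    intro k
    cases k with
    | nil =>
      constructor
      · intro hg
        exfalso
        obtain ⟨k0, hk0⟩ := dom_nonempty n
        have hsome : ((FNode.extender (c :: s0) n).model ((c :: s0) ++ k0)).isSome := by
          rw [model_extender, if_pos (List.prefix_append _ _), List.drop_left]
          exact hk0
        exact (hg _ hsome).1 List.nil_prefix
      · intro _
        cases c <;> rfl
    | cons c' k0 =>
      by_cases hc : c = c'
      · subst hc
        have hstep : insExt n v f (c :: s0) (c :: k0)
            = (insExt n v f s0 k0).map (mkExt [c]) := by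
          cases c <;> rfl
        constructor
        · intro hg
          obtain ⟨t', h1, h2, h3, h4⟩ := (ih k0).1 (good_extender_cons.mp hg)
          refine ⟨mkExt [c] t', ?_, inv_mkExt h2, ?_, ?_⟩
          · show insExt n v f (c :: s0) (c :: k0) = _
            rw [hstep]
            show (insExt n v f s0 k0).map (mkExt [c]) = _
            rw [show insExt n v f s0 k0 = some t' from h1]
            rfl
          · rw [model_mkExt, model_extender_cons, model_extender_nil]
            exact h3
          · intro k' hk'
            rw [model_mkExt]
            match k' with
            | [] => rw [model_extender_cons_nil, model_extender_cons_nil]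
            | d :: k'' =>
              by_cases hd : c = d
              · subst hd
                have hk'' : k'' ≠ k0 := fun h => hk' (by rw [h])
                rw [model_extender_cons, model_extender_nil, model_extender_cons,
                  h4 k'' hk'']
              · rw [model_extender_cons_ne hd, model_extender_cons_ne hd]
        · intro hg
          have h := (ih k0).2 (fun h => hg (good_extender_cons.mpr h))
          show insExt n v f (c :: s0) (c :: k0) = none
          rw [hstep, show insExt n v f s0 k0 = none from h]
          rfl
      · -- divergence: the condition always holds
        have hgood : Good (FNode.extender (c :: s0) n) (c' :: k0) := by
          intro k' hk'
          match k' with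
          | [] => rw [model_extender_cons_nil] at hk'; simp at hk'
          | d :: k'' =>
            by_cases hd : c = d
            · subst hd
              constructor <;> rw [List.cons_prefix_cons] <;>
                exact fun hp => hc (by rw [hp.1])
            · rw [model_extender_cons_ne hd] at hk'; simp at hk'
        have key : ∀ t', insExt n v f (c :: s0) (c' :: k0) = some t' →
            t'.inv ∧ t'.model (c' :: k0) = some v ∧
            ∀ k', k' ≠ c' :: k0 →
              t'.model k' = (FNode.extender (c :: s0) n).model k' := by
          intro t' ht'
          have hmodL : ∀ k'', (mkExt s0 n).model k'' = (FNode.extender (c :: s0) n).model (c :: k'') := by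
            intro k''
            rw [model_mkExt, model_extender_cons]
          have hbig : ∀ X Y : FNode α,
              (c = Side.L → X = mkExt s0 n ∧ Y = mkExt k0 (FNode.leaf v)) →
              (c = Side.R → Y = mkExt s0 n ∧ X = mkExt k0 (FNode.leaf v)) →
              t' = FNode.branch X Y → True := fun _ _ _ _ _ => trivial
          clear hbig
          cases c with
          | L =>
            cases c' with
            | L => exact absurd rfl hc
            | R =>
              have ht : t' = FNode.branch (mkExt s0 n) (mkExt k0 (FNode.leaf v)) := by
                simpa [insExt] using ht'.symm
              subst ht
              refine ⟨⟨inv_mkExt hn, inv_mkExt trivial⟩, ?_, ?_⟩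
              · show (mkExt k0 (FNode.leaf v)).model k0 = some v
                exact single_model_self k0 v
              · intro k' hk'
                match k' with
                | [] => rw [model_extender_cons_nil]; rfl
                | Side.L :: k'' =>
                  show (mkExt s0 n).model k'' = _
                  exact hmodL k''
                | Side.R :: k'' =>
                  have hk'' : k'' ≠ k0 := fun h => hk' (by rw [h])
                  show (mkExt k0 (FNode.leaf v)).model k'' = _
                  rw [single_model_ne hk'' v, model_extender_cons_ne (by simp)]
          | R =>
            cases c' with
            | R => exact absurd rfl hc
            | L =>
              have ht : t' = FNode.branch (mkExt k0 (FNode.leaf v)) (mkExt s0 n) := by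
                simpa [insExt] using ht'.symm
              subst ht
              refine ⟨⟨inv_mkExt trivial, inv_mkExt hn⟩, ?_, ?_⟩
              · show (mkExt k0 (FNode.leaf v)).model k0 = some v
                exact single_model_self k0 v
              · intro k' hk'
                match k' with
                | [] => rw [model_extender_cons_nil]; rfl
                | Side.R :: k'' =>
                  show (mkExt s0 n).model k'' = _
                  exact hmodL k''
                | Side.L :: k'' =>
                  have hk'' : k'' ≠ k0 := fun h => hk' (by rw [h])
                  show (mkExt k0 (FNode.leaf v)).model k'' = _
                  rw [single_model_ne hk'' v, model_extender_cons_ne (by simp)]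
        constructor
        · intro _
          have hsome : ∃ t', insExt n v f (c :: s0) (c' :: k0) = some t' := by
            cases c with
            | L => cases c' with
              | L => exact absurd rfl hc
              | R => exact ⟨_, rfl⟩
            | R => cases c' with
              | R => exact absurd rfl hc
              | L => exact ⟨_, rfl⟩
          obtain ⟨t', ht'⟩ := hsome
          obtain ⟨h1, h2, h3⟩ := key t' ht'
          exact ⟨t', ht', h1, h2, h3⟩
        · intro hg
          exact absurd hgood hg

lemma insF_spec (t : FNode α) (hinv : t.inv) (v : α) :
    Spec t v (fun k => insF t k v) := by
  induction t with
  | leaf w =>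
    intro k
    have hng : ¬ Good (FNode.leaf w) k := by
      intro hg
      exact (hg [] (by simp [FNode.model])).2 List.nil_prefix
    exact ⟨fun hg => absurd hg hng, fun _ => rfl⟩
  | branch l r ihl ihr =>
    obtain ⟨hl, hr⟩ := hinv
    have ihl := ihl hl
    have ihr := ihr hr
    intro k
    match k with
    | [] =>
      have hng : ¬ Good (FNode.branch l r) [] := by
        intro hg
        obtain ⟨k0, hk0⟩ := dom_nonempty (FNode.branch l r)
        exact (hg k0 hk0).1 List.nil_prefix
      exact ⟨fun hg => absurd hg hng, fun _ => rfl⟩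
    | Side.L :: k0 =>
      have hgood : Good (FNode.branch l r) (Side.L :: k0) ↔ Good l k0 := by
        constructor
        · intro hg k' hk'
          have h := hg (Side.L :: k') hk'
          constructor
          · intro hp
            exact h.1 (List.cons_prefix_cons.mpr ⟨rfl, hp⟩)
          · intro hp
            exact h.2 (List.cons_prefix_cons.mpr ⟨rfl, hp⟩)
        · intro hg k' hk'
          match k' with
          | [] => simp [FNode.model] at hk'
          | Side.L :: k'' =>
            have h := hg k'' hk'
            constructor
            · intro hp
              exact h.1 (List.cons_prefix_cons.mp hp).2
            · intro hp
              exact h.2 (List.cons_prefix_cons.mp hp).2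
          | Side.R :: k'' =>
            constructor
            · intro hp
              cases (List.cons_prefix_cons.mp hp).1
            · intro hp
              cases (List.cons_prefix_cons.mp hp).1
      constructor
      · intro hg
        obtain ⟨t', h1, h2, h3, h4⟩ := (ihl k0).1 (hgood.mp hg)
        refine ⟨FNode.branch t' r, ?_, ⟨h2, hr⟩, h3, ?_⟩
        · show (insF l k0 v).map (fun t => FNode.branch t r) = _
          rw [show insF l k0 v = some t' from h1]; rfl
        · intro k' hk'
          match k' with
          | [] => rfl
          | Side.L :: k'' =>
            have : k'' ≠ k0 := fun h => hk' (by rw [h])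
            exact h4 k'' this
          | Side.R :: k'' => rfl
      · intro hg
        have h := (ihl k0).2 (fun h => hg (hgood.mpr h))
        show (insF l k0 v).map (fun t => FNode.branch t r) = none
        rw [show insF l k0 v = none from h]; rfl
    | Side.R :: k0 =>
      have hgood : Good (FNode.branch l r) (Side.R :: k0) ↔ Good r k0 := by
        constructor
        · intro hg k' hk'
          have h := hg (Side.R :: k') hk'
          constructor
          · intro hp
            exact h.1 (List.cons_prefix_cons.mpr ⟨rfl, hp⟩)
          · intro hp
            exact h.2 (List.cons_prefix_cons.mpr ⟨rfl, hp⟩)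
        · intro hg k' hk'
          match k' with
          | [] => simp [FNode.model] at hk'
          | Side.R :: k'' =>
            have h := hg k'' hk'
            constructor
            · intro hp
              exact h.1 (List.cons_prefix_cons.mp hp).2
            · intro hp
              exact h.2 (List.cons_prefix_cons.mp hp).2
          | Side.L :: k'' =>
            constructor
            · intro hp
              cases (List.cons_prefix_cons.mp hp).1
            · intro hp
              cases (List.cons_prefix_cons.mp hp).1
      constructor
      · intro hg
        obtain ⟨t', h1, h2, h3, h4⟩ := (ihr k0).1 (hgood.mp hg)
        refine ⟨FNode.branch l t', ?_, ⟨hl, h2⟩, h3, ?_⟩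
        · show (insF r k0 v).map (fun t => FNode.branch l t) = _
          rw [show insF r k0 v = some t' from h1]; rfl
        · intro k' hk'
          match k' with
          | [] => rfl
          | Side.R :: k'' =>
            have : k'' ≠ k0 := fun h => hk' (by rw [h])
            exact h4 k'' this
          | Side.L :: k'' => rfl
      · intro hg
        have h := (ihr k0).2 (fun h => hg (hgood.mpr h))
        show (insF r k0 v).map (fun t => FNode.branch l t) = none
        rw [show insF r k0 v = none from h]; rfl
  | extender s n ih =>
    obtain ⟨-, -, hn⟩ := hinv
    exact insExt_spec n v (fun k' => insF n k' v) hn (ih hn) s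

end Dev

/-- there is an `insert` function on flat Plebeia trees that,
on trees satisfying the structural invariants, succeeds exactly when adding the
key keeps the domain prefix-free and the key is fresh, in which case it extends
the model by `{k ↦ v}` and preserves the invariants; otherwise it returns `none`. -/
theorem stmt6 {α : Type} :
    ∃ ins : FNode α → Key → α → Option (FNode α),
      ∀ (t : FNode α) (k : Key) (v : α), t.inv →
        ((PrefixFreeSet (insert k t.dom) ∧ k ∉ t.dom) →
          ∃ t' : FNode α, ins t k v = some t' ∧ t'.inv ∧
            t'.model k = some v ∧ ∀ k' : Key, k' ≠ k → t'.model k' = t.model k') ∧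
        (¬ (PrefixFreeSet (insert k t.dom) ∧ k ∉ t.dom) →
          ins t k v = none) := by
  refine ⟨insF, fun t k v hinv => ?_⟩
  have h := insF_spec t hinv v k
  rw [good_iff t k]
  exact h
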